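/- Let F be an algebraically closed field of characteristic 2 and let M be a function field over F. Let t ∈ M be transcendental over F and not a square in M (so M/F(t) is separable). Let x ∈ M, set u = (x^2 + t^2 + t)/(x^2 + t), and let b ∈ F with b ≠ 1. Then for every prime v of M that is unramified over F(t) and satisfies v(t) = 0, one has v(u + b) ∈ {−1, 0, 1}. (Here x^2 + t ≠ 0 and u + b ≠ 0 automatically, since t is not a square in M and F is algebraically closed.) -/
import Mathlib


/-- A prime of a function field `M` over a constant field `F`: a surjective additive
valuation `M → ℤ` that is trivial on `F`. -/
structure FFPrime (F M : Type*) [Field F] [Field M] [Algebra F M] where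
  v : M → ℤ
  map_mul : ∀ x y : M, x ≠ 0 → y ≠ 0 → v (x * y) = v x + v y
  add_min : ∀ x y : M, x ≠ 0 → y ≠ 0 → x + y ≠ 0 → min (v x) (v y) ≤ v (x + y)
  surj : ∀ n : ℤ, ∃ x : M, x ≠ 0 ∧ v x = n
  triv : ∀ c : F, c ≠ 0 → v (algebraMap F M c) = 0

/-- A prime of `M` is unramified over `F(t)` if some nonzero element of `F(t)` has
valuation `1`. -/
def FFPrime.UnramifiedOver {F M : Type*} [Field F] [Field M] [Algebra F M]
    (P : FFPrime F M) (t : M) : Prop :=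
  ∃ r : M, r ∈ IntermediateField.adjoin F {t} ∧ r ≠ 0 ∧ P.v r = 1

namespace FFPrime

variable {F M : Type*} [Field F] [Field M] [Algebra F M] (P : FFPrime F M)

lemma v_one : P.v 1 = 0 := by
  have h := P.map_mul 1 1 one_ne_zero one_ne_zero
  rw [mul_one] at h; omega

lemma v_div {x y : M} (hx : x ≠ 0) (hy : y ≠ 0) : P.v (x / y) = P.v x - P.v y := by
  have h := P.map_mul (x / y) y (div_ne_zero hx hy) hy
  rw [div_mul_cancel₀ _ hy] at h; omega

lemma v_neg {x : M} (hx : x ≠ 0) : P.v (-x) = P.v x := by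
  have h1 := P.map_mul (-1 : M) (-1 : M) (by norm_num) (by norm_num)
  rw [neg_mul_neg, one_mul] at h1
  have h2 := P.v_one
  have h3 := P.map_mul (-1 : M) x (by norm_num) hx
  rw [neg_one_mul] at h3
  omega

lemma v_sq {x : M} (hx : x ≠ 0) : P.v (x ^ 2) = 2 * P.v x := by
  have h := P.map_mul x x hx hx
  rw [← pow_two] at h; omega

lemma v_add_of_ne {x y : M} (hx : x ≠ 0) (hy : y ≠ 0) (h : P.v x ≠ P.v y) :
    x + y ≠ 0 ∧ P.v (x + y) = min (P.v x) (P.v y) := by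
  have hxy : x + y ≠ 0 := by
    intro h0
    have hyx : y = -x := eq_neg_of_add_eq_zero_right h0
    rw [hyx, P.v_neg hx] at h
    exact h rfl
  refine ⟨hxy, ?_⟩
  have h1 := P.add_min x y hx hy hxy
  have h2 := P.add_min (x + y) (-y) hxy (neg_ne_zero.mpr hy) (by simpa using hx)
  rw [add_neg_cancel_right, P.v_neg hy] at h2
  have h3 := P.add_min (x + y) (-x) hxy (neg_ne_zero.mpr hx)
    (by rw [show x + y + -x = y from by ring]; exact hy)
  rw [show x + y + -x = y from by ring, P.v_neg hx] at h3
  omega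

lemma key {p q : M} (hq0 : q ≠ 0) (hq : P.v q = 1)
    (hp : p = 0 ∨ (p ≠ 0 ∧ ∃ k : ℤ, P.v p = 2 * k)) :
    p + q ≠ 0 ∧ P.v (p + q) ≤ 1 := by
  rcases hp with rfl | ⟨hp0, k, hk⟩
  · rw [zero_add]; exact ⟨hq0, by omega⟩
  · have hne : P.v p ≠ P.v q := by omega
    obtain ⟨h1, h2⟩ := P.v_add_of_ne hp0 hq0 hne
    exact ⟨h1, by omega⟩

lemma v_prod_linear (t : M) (htrans : Transcendental F t) (s : Multiset F) :
    (s.map (fun a => t - algebraMap F M a)).prod ≠ 0 ∧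
      P.v (s.map (fun a => t - algebraMap F M a)).prod
        = (s.map (fun a => P.v (t - algebraMap F M a))).sum := by
  have hlin : ∀ a : F, t - algebraMap F M a ≠ 0 := by
    intro a h
    rw [sub_eq_zero] at h
    exact htrans (h ▸ isAlgebraic_algebraMap a)
  induction s using Multiset.induction_on with
  | empty => simpa using P.v_one
  | cons a s ih =>
    simp only [Multiset.map_cons, Multiset.prod_cons, Multiset.sum_cons]
    exact ⟨mul_ne_zero (hlin a) ih.1, by rw [P.map_mul _ _ (hlin a) ih.1, ih.2]⟩

open Polynomial in
lemma v_aeval [IsAlgClosed F] (t : M) (htrans : Transcendental F t) {p : F[X]}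
    (hp : p ≠ 0) :
    aeval t p ≠ 0 ∧
      P.v (aeval t p) = (p.roots.map (fun a => P.v (t - algebraMap F M a))).sum := by
  have hsp : Multiset.card p.roots = p.natDegree :=
    splits_iff_card_roots.mp (IsAlgClosed.splits p)
  have heq := C_leadingCoeff_mul_prod_multiset_X_sub_C hsp
  have h2 : aeval t p
      = algebraMap F M p.leadingCoeff * (p.roots.map (fun a => t - algebraMap F M a)).prod := by
    conv_lhs => rw [← heq]
    rw [_root_.map_mul, map_multiset_prod, Multiset.map_map, aeval_C]
    congr 1
    apply congrArg
    apply Multiset.map_congr rfl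
    intro a _
    simp [Function.comp]
  obtain ⟨hne, hv⟩ := P.v_prod_linear t htrans p.roots
  have hlc : p.leadingCoeff ≠ 0 := leadingCoeff_ne_zero.mpr hp
  have halg : algebraMap F M p.leadingCoeff ≠ 0 := by simpa using hlc
  refine ⟨h2 ▸ mul_ne_zero halg hne, ?_⟩
  rw [h2, P.map_mul _ _ halg hne, P.triv _ hlc, hv, zero_add]

end FFPrime

/-- Let `F` be an algebraically closed field of characteristic `2`, `M` a function
field over `F`, and `t ∈ M` transcendental over `F` and not a square in `M`. For
`x ∈ M`, set `u = (x² + t² + t)/(x² + t)`, and let `b ∈ F`, `b ≠ 1`. Then every prime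
of `M` unramified over `F(t)` that is neither a zero nor a pole of `t` has order in
`{-1, 0, 1}` at `u + b`. -/
theorem stmt_13 {F M : Type*} [Field F] [Field M] [Algebra F M] [IsAlgClosed F]
    [CharP F 2]
    (t : M) (htrans : Transcendental F t)
    (hfin : FiniteDimensional (IntermediateField.adjoin F {t}) M)
    (hnp : ¬∃ c : M, c ^ 2 = t)
    (x : M) (b : F) (hb1 : b ≠ 1)
    (P : FFPrime F M) (hunr : P.UnramifiedOver t) (hPt : P.v t = 0) :
    P.v ((x ^ 2 + t ^ 2 + t) / (x ^ 2 + t) + algebraMap F M b) ∈ ({-1, 0, 1} : Set ℤ) := by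
  classical
  have hinj := (algebraMap F M).injective
  haveI : CharP M 2 := charP_of_injective_algebraMap hinj 2
  have h2M : (2 : M) = 0 := CharTwo.two_eq_zero
  set A := algebraMap F M with hA
  have hlin : ∀ a : F, t - A a ≠ 0 := by
    intro a h
    rw [sub_eq_zero] at h
    exact htrans (h ▸ isAlgebraic_algebraMap a)
  have ht0 : t ≠ 0 := by simpa using hlin 0
  have hAne : ∀ a : F, a ≠ 0 → A a ≠ 0 := by
    intro a ha h
    exact ha (hinj (by simpa using h))
  have hw0 : ∀ a : F, 0 ≤ P.v (t - A a) := by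
    intro a
    by_cases ha : a = 0
    · simp [ha, hPt]
    · have hmin := P.add_min t (-(A a)) ht0 (neg_ne_zero.mpr (hAne a ha))
        (by rw [← sub_eq_add_neg]; exact hlin a)
      rw [← sub_eq_add_neg, P.v_neg (hAne a ha), P.triv a ha] at hmin
      omega
  -- the center `a` of the place
  obtain ⟨r, hrmem, hr0, hr1⟩ := hunr
  obtain ⟨p, q, hpq⟩ := (IntermediateField.mem_adjoin_simple_iff F r).mp hrmem
  have hq0 : q ≠ 0 := by rintro rfl; simp at hpq; exact hr0 hpq
  have hp0 : p ≠ 0 := by rintro rfl; simp at hpq; exact hr0 hpq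
  obtain ⟨hpne, hpv⟩ := P.v_aeval t htrans hp0
  obtain ⟨hqne, hqv⟩ := P.v_aeval t htrans hq0
  have hrv : P.v r = (p.roots.map (fun a => P.v (t - A a))).sum
      - (q.roots.map (fun a => P.v (t - A a))).sum := by
    rw [hpq, P.v_div hpne hqne, hpv, hqv]
  have hex : ∃ a : F, 1 ≤ P.v (t - A a) := by
    by_contra hcon
    push_neg at hcon
    have hz : ∀ a : F, P.v (t - A a) = 0 := fun a => le_antisymm (by have := hcon a; omega) (hw0 a)
    have hs : ∀ (m : Multiset F), (m.map (fun a => P.v (t - A a))).sum = 0 := by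
      intro m
      rw [Multiset.map_congr rfl (fun a _ => hz a)]
      simp
    rw [hrv, hs, hs, sub_zero] at hr1
    exact one_ne_zero hr1.symm
  obtain ⟨a, ha⟩ := hex
  have huniq : ∀ a' : F, a' ≠ a → P.v (t - A a') = 0 := by
    intro a' hne
    have hAd : A (a - a') ≠ 0 := hAne _ (sub_ne_zero.mpr (fun h => hne h.symm))
    have h0 : P.v (A (a - a')) = 0 := P.triv _ (sub_ne_zero.mpr (fun h => hne h.symm))
    have hsub : t - A a' = (t - A a) + A (a - a') := by rw [map_sub]; ring
    have h2 := (P.v_add_of_ne (hlin a) hAd (by omega)).2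
    rw [← hsub] at h2
    omega
  have he1 : P.v (t - A a) = 1 := by
    have hdvd : ∀ (m : Multiset F),
        P.v (t - A a) ∣ (m.map (fun a' => P.v (t - A a'))).sum := by
      intro m
      apply Multiset.dvd_sum
      intro z hz
      obtain ⟨a', _, rfl⟩ := Multiset.mem_map.mp hz
      by_cases h : a' = a
      · subst h; exact dvd_rfl
      · rw [huniq a' h]; exact dvd_zero _
    have h1 : P.v (t - A a) ∣ 1 := by
      rw [← hr1, hrv]; exact dvd_sub (hdvd _) (hdvd _)
    have h2 := Int.le_of_dvd one_pos h1
    omega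
  -- the constant c = 1 + b
  set c : F := 1 + b with hcdef
  have hc : c ≠ 0 := by
    intro h
    apply hb1
    have hb : b = -1 := eq_neg_of_add_eq_zero_right h
    rw [hb]; exact CharTwo.neg_eq 1
  have hac : a + c ≠ a := by
    intro h
    exact hc (by linear_combination h)
  -- square roots
  obtain ⟨e, he⟩ := IsAlgClosed.exists_pow_nat_eq a (n := 2) two_pos
  obtain ⟨f, hfr⟩ := IsAlgClosed.exists_pow_nat_eq ((a ^ 2 + a * c) / c) (n := 2) two_pos
  have hf : c * f ^ 2 = a ^ 2 + a * c := by rw [hfr]; field_simp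
  -- the two key elements
  set D : M := x ^ 2 + t with hDdef
  set N : M := A c * x ^ 2 + t * (t + A c) with hNdef
  have hAcF : A c ≠ 0 := hAne c hc
  have htc : t + A c ≠ 0 := by
    have := hlin (-c)
    rwa [map_neg, sub_neg_eq_add] at this
  have hvtc : 0 ≤ P.v (t + A c) := by
    have := hw0 (-c)
    rwa [map_neg, sub_neg_eq_add] at this
  -- D = (x + A e)^2 + (t - A a),  v D ≤ 1, D ≠ 0
  have hAe2 : (A e) ^ 2 = A a := by rw [← map_pow, he]
  have hDeq : D = (x + A e) ^ 2 + (t - A a) := by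
    rw [hDdef]
    linear_combination (-(x * A e)) * h2M - hAe2
  have hDkey : D ≠ 0 ∧ P.v D ≤ 1 := by
    rw [hDeq]
    apply P.key (hlin a) he1
    by_cases hx : x + A e = 0
    · left; rw [hx]; ring
    · right
      exact ⟨pow_ne_zero 2 hx, P.v (x + A e), P.v_sq hx⟩
  -- N = A c * (x + A f)^2 + (t - A a) * (t - A (a + c)),  v N ≤ 1, N ≠ 0
  have hvq2 : P.v ((t - A a) * (t - A (a + c))) = 1 := by
    rw [P.map_mul _ _ (hlin a) (hlin (a + c)), he1, huniq (a + c) hac]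
    ring
  have hcf : A c * (A f) ^ 2 = (A a) ^ 2 + A a * A c := by
    rw [← map_pow, ← map_pow, ← _root_.map_mul, ← _root_.map_mul, ← map_add]
    exact congrArg A hf
  have hNeq : N = A c * (x + A f) ^ 2 + (t - A a) * (t - A (a + c)) := by
    rw [hNdef, _root_.map_add A a c]
    linear_combination (t * A c + t * A a - A c * x * A f - A a ^ 2 - A a * A c) * h2M - hcf
  have hNkey : N ≠ 0 ∧ P.v N ≤ 1 := by
    rw [hNeq]
    apply P.key (mul_ne_zero (hlin a) (hlin (a + c))) hvq2
    by_cases hx : x + A f = 0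
    · left; rw [hx]; ring
    · right
      refine ⟨mul_ne_zero hAcF (pow_ne_zero 2 hx), P.v (x + A f), ?_⟩
      rw [P.map_mul _ _ hAcF (pow_ne_zero 2 hx), P.triv c hc, P.v_sq hx, zero_add]
  obtain ⟨hDne, hDle⟩ := hDkey
  obtain ⟨hNne, hNle⟩ := hNkey
  -- the goal expression equals N / D
  have hCc : A c = 1 + A b := by rw [hcdef, map_add, map_one]
  have hgoal : (x ^ 2 + t ^ 2 + t) / (x ^ 2 + t) + A b = N / D := by
    rw [div_add' _ _ _ hDne]
    congr 1
    rw [hNdef, hCc, hDdef]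
    ring
  rw [hgoal, P.v_div hNne hDne]
  -- case analysis on v x
  have hmain : P.v N - P.v D = 0 ∨ (0 ≤ P.v N ∧ 0 ≤ P.v D ∧ min (P.v N) (P.v D) ≤ 0) := by
    by_cases hxc : x ≠ 0 ∧ P.v x < 0
    · -- v x < 0 : both have valuation 2 v x
      obtain ⟨hx0, hxv⟩ := hxc
      have hx2 : P.v (x ^ 2) = 2 * P.v x := P.v_sq hx0
      have hvD : P.v D = 2 * P.v x := by
        have := (P.v_add_of_ne (pow_ne_zero 2 hx0) ht0 (by omega)).2
        rw [← hDdef] at this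
        omega
      have hvN : P.v N = 2 * P.v x := by
        have hv1 : P.v (A c * x ^ 2) = 2 * P.v x := by
          rw [P.map_mul _ _ hAcF (pow_ne_zero 2 hx0), P.triv c hc, hx2, zero_add]
        have hv2 : P.v (t * (t + A c)) = P.v (t + A c) := by
          rw [P.map_mul _ _ ht0 htc, hPt, zero_add]
        have := (P.v_add_of_ne (mul_ne_zero hAcF (pow_ne_zero 2 hx0))
          (mul_ne_zero ht0 htc) (by omega)).2
        rw [← hNdef] at this
        omega
      left; omega
    · -- v x ≥ 0 or x = 0
      right
      have hvDge : 0 ≤ P.v D := by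
        by_cases hx0 : x = 0
        · rw [hDdef, hx0]; simpa using hPt.ge
        · have hx2 : P.v (x ^ 2) = 2 * P.v x := P.v_sq hx0
          have hxv : 0 ≤ P.v x := by
            rcases not_and_or.mp hxc with h | h
            · exact absurd hx0 h
            · omega
          have := P.add_min (x ^ 2) t (pow_ne_zero 2 hx0) ht0 (hDdef ▸ hDne)
          rw [← hDdef] at this
          omega
      have hvNge : 0 ≤ P.v N := by
        have hv2 : P.v (t * (t + A c)) = P.v (t + A c) := by
          rw [P.map_mul _ _ ht0 htc, hPt, zero_add]
        by_cases hx0 : x = 0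
        · rw [hNdef, hx0]
          simp only [ne_eq, OfNat.ofNat_ne_zero, not_false_eq_true, zero_pow, mul_zero, zero_add]
          omega
        · have hx2 : P.v (x ^ 2) = 2 * P.v x := P.v_sq hx0
          have hxv : 0 ≤ P.v x := by
            rcases not_and_or.mp hxc with h | h
            · exact absurd hx0 h
            · omega
          have hv1 : P.v (A c * x ^ 2) = 2 * P.v x := by
            rw [P.map_mul _ _ hAcF (pow_ne_zero 2 hx0), P.triv c hc, hx2, zero_add]
          have := P.add_min (A c * x ^ 2) (t * (t + A c))
            (mul_ne_zero hAcF (pow_ne_zero 2 hx0)) (mul_ne_zero ht0 htc) (hNdef ▸ hNne)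
          rw [← hNdef] at this
          omega
      refine ⟨hvNge, hvDge, ?_⟩
      have hsum : N + A c * D = t ^ 2 := by
        rw [hNdef, hDdef]
        linear_combination (A c * x ^ 2 + t * A c) * h2M
      have ht2 : P.v (t ^ 2) = 0 := by rw [P.v_sq ht0, hPt]; ring
      have hAcD : P.v (A c * D) = P.v D := by
        rw [P.map_mul _ _ hAcF hDne, P.triv c hc, zero_add]
      have hmin := P.add_min N (A c * D) hNne (mul_ne_zero hAcF hDne)
        (by rw [hsum]; exact pow_ne_zero 2 ht0)
      rw [hsum, ht2] at hmin
      omega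
  simp only [Set.mem_insert_iff, Set.mem_singleton_iff]
  omega
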